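/- Fix a countably infinite set Δ and let Mod_Δ(K) be the set of ranked models of K whose domain is Δ. For every defeasible knowledge base K and all ALC concepts C and D: K modularly entails C ⊏∼ D (i.e. every modular model of K satisfies C ⊏∼ D) if and only if every interpretation in Mod_Δ(K) satisfies C ⊏∼ D. -/

import Mathlib

namespace DefeasibleDL

/-- ALC concepts over concept names `C` and role names `R`. -/
inductive Concept (C R : Type) : Type where
  | top : Concept C R
  | bot : Concept C R
  | atom : C → Concept C R
  | neg : Concept C R → Concept C R
  | conj : Concept C R → Concept C R → Concept C R
  | disj : Concept C R → Concept C R → Concept C R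
  | ex : R → Concept C R → Concept C R
  | all : R → Concept C R → Concept C R

/-- A classical interpretation with domain `D`. -/
structure ClassInterp (C R D : Type) where
  interpC : C → Set D
  interpR : R → D → D → Prop

/-- Extension of a concept in a classical interpretation. -/
def ClassInterp.eval {C R D : Type} (I : ClassInterp C R D) : Concept C R → Set D
  | .top => Set.univ
  | .bot => ∅
  | .atom a => I.interpC a
  | .neg c => (I.eval c)ᶜ
  | .conj c d => I.eval c ∩ I.eval d
  | .disj c d => I.eval c ∪ I.eval d
  | .ex r c => {x | ∃ y, I.interpR r x y ∧ y ∈ I.eval c}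
  | .all r c => {x | ∀ y, I.interpR r x y → y ∈ I.eval c}

/-- The `pref`-minimal elements of a set `S`. -/
def minSet {D : Type} (pref : D → D → Prop) (S : Set D) : Set D :=
  {x | x ∈ S ∧ ∀ y ∈ S, ¬ pref y x}

/-- A preferential interpretation: a classical interpretation together with a smooth
strict partial order on the domain. -/
structure PrefInterp (C R D : Type) extends ClassInterp C R D where
  pref : D → D → Prop
  pref_irrefl : ∀ x, ¬ pref x x
  pref_trans : ∀ x y z, pref x y → pref y z → pref x z
  smooth : ∀ c : Concept C R, (toClassInterp.eval c).Nonempty →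
      (minSet pref (toClassInterp.eval c)).Nonempty

/-- Satisfaction of a general concept inclusion `c ⊑ d`. -/
def PrefInterp.satGCI {C R D : Type} (P : PrefInterp C R D) (c d : Concept C R) : Prop :=
  P.toClassInterp.eval c ⊆ P.toClassInterp.eval d

/-- Satisfaction of a defeasible concept inclusion `c ⊏∼ d`. -/
def PrefInterp.satDCI {C R D : Type} (P : PrefInterp C R D) (c d : Concept C R) : Prop :=
  minSet P.pref (P.toClassInterp.eval c) ⊆ P.toClassInterp.eval d

/-- A strict partial order is modular if its incomparability relation is transitive. -/
def Modular {D : Type} (pref : D → D → Prop) : Prop :=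
  ∀ x y z : D, (¬ pref x y ∧ ¬ pref y x) → (¬ pref y z ∧ ¬ pref z y) →
    (¬ pref x z ∧ ¬ pref z x)

/-- Convexity of a height function: every value below an attained value is attained. -/
def Convex {D : Type} (h : D → ℕ) : Prop :=
  ∀ (x : D) (j : ℕ), j < h x → ∃ y : D, h y = j

/-- `pref` is ranked by the convex height function `h`. -/
def RankedBy {D : Type} (pref : D → D → Prop) (h : D → ℕ) : Prop :=
  Convex h ∧ ∀ x y : D, pref x y ↔ h x < h y

/-- `pref` is a ranked order. -/
def IsRanked {D : Type} (pref : D → D → Prop) : Prop :=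
  ∃ h : D → ℕ, RankedBy pref h

/-- Statements: general or defeasible concept inclusions. -/
inductive Stmt (C R : Type) : Type where
  | gci : Concept C R → Concept C R → Stmt C R
  | dci : Concept C R → Concept C R → Stmt C R

def PrefInterp.satStmt {C R D : Type} (P : PrefInterp C R D) : Stmt C R → Prop
  | .gci c d => P.satGCI c d
  | .dci c d => P.satDCI c d

/-- A defeasible knowledge base: a finite TBox and a finite DTBox
(both represented as sets of pairs of concepts). -/
structure KB (C R : Type) where
  tbox : Set (Concept C R × Concept C R)
  dbox : Set (Concept C R × Concept C R)
  tbox_finite : tbox.Finite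
  dbox_finite : dbox.Finite

/-- The statements of a knowledge base. -/
def KB.stmts {C R : Type} (K : KB C R) : Set (Stmt C R) :=
  {s | (∃ p ∈ K.tbox, s = Stmt.gci p.1 p.2) ∨ (∃ p ∈ K.dbox, s = Stmt.dci p.1 p.2)}

/-- A preferential model of a knowledge base. -/
def PrefInterp.isModel {C R D : Type} (P : PrefInterp C R D) (K : KB C R) : Prop :=
  (∀ p ∈ K.tbox, P.satGCI p.1 p.2) ∧ (∀ p ∈ K.dbox, P.satDCI p.1 p.2)

/-- Preferential entailment. -/
def prefEntails {C R : Type} (K : KB C R) (s : Stmt C R) : Prop :=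
  ∀ (D : Type) (_ : Nonempty D) (P : PrefInterp C R D), P.isModel K → P.satStmt s

/-- Modular entailment. -/
def modEntails {C R : Type} (K : KB C R) (s : Stmt C R) : Prop :=
  ∀ (D : Type) (_ : Nonempty D) (P : PrefInterp C R D),
    Modular P.pref → P.isModel K → P.satStmt s

/-!
Ranked orders are modular, which gives one direction. Conversely, let `x` be a minimal
`c`-element of a modular model `P` of `K`. In a modular order `a ≺ b` implies `a ≺ z` or
`z ≺ b` for every `z`, so the number of concepts among `c` and the DCI antecedents having a
minimal element below `y` is a height `H y ∈ ℕ` with the same minimal elements on those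
concepts. Pulling `P` back along a map from `Δ` onto a countable subdomain that contains `x`,
an `H`-minimal element of every concept, and witnesses for every existential restriction,
and ordering by `H`, gives a ranked model of `K` on `Δ`; its `c ⊏∼ d` forces `x` into `d`.
-/

variable {C R : Type}

namespace Concept

def encode (fC : C → ℕ) (fR : R → ℕ) : Concept C R → ℕ
  | .top => Nat.pair 0 0
  | .bot => Nat.pair 1 0
  | .atom a => Nat.pair 2 (fC a)
  | .neg c => Nat.pair 3 (encode fC fR c)
  | .conj c d => Nat.pair 4 (Nat.pair (encode fC fR c) (encode fC fR d))
  | .disj c d => Nat.pair 5 (Nat.pair (encode fC fR c) (encode fC fR d))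
  | .ex r c => Nat.pair 6 (Nat.pair (fR r) (encode fC fR c))
  | .all r c => Nat.pair 7 (Nat.pair (fR r) (encode fC fR c))

theorem encode_injective {fC : C → ℕ} {fR : R → ℕ} (hC : fC.Injective) (hR : fR.Injective) :
    (encode fC fR).Injective := by
  intro x y h
  induction x generalizing y <;> cases y <;>
    simp only [encode, Nat.pair_eq_pair, hC.eq_iff, hR.eq_iff, reduceCtorEq, Nat.succ_ne_zero,
      OfNat.ofNat_ne_zero, false_and] at h ⊢ <;> grind

instance [Countable C] [Countable R] : Countable (Concept C R) := by
  obtain ⟨fC, hC⟩ := exists_injective_nat C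
  obtain ⟨fR, hR⟩ := exists_injective_nat R
  exact (encode_injective hC hR).countable

end Concept

section Order

variable {D E : Type}

theorem IsRanked.modular {pref : D → D → Prop} (h : IsRanked pref) : Modular pref := by
  obtain ⟨H, -, hH⟩ := h
  intro x y z
  simp only [hH]
  omega

/-- `Nat.count` of the attained heights below `H a` is a convex height inducing the same order. -/
theorem isRanked_height_lt (H : D → ℕ) : IsRanked (fun a b => H a < H b) := by
  classical
  let p : ℕ → Prop := (· ∈ Set.range H)
  refine ⟨fun a => Nat.count p (H a), fun x j hj => ?_,
    fun a b => ⟨Nat.count_strict_mono ⟨a, rfl⟩, fun h => ?_⟩⟩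
  · have hcard : ∀ hf : (Set.ofPred p).Finite, j < hf.toFinset.card :=
      fun hf => hj.trans_le (Nat.count_le_card hf _)
    obtain ⟨y, hy⟩ := Nat.nth_mem j hcard
    exact ⟨y, show Nat.count p (H y) = j by rw [hy, Nat.count_nth hcard]⟩
  · contrapose! h
    exact Nat.count_monotone p h

theorem minSet_height_nonempty (H : D → ℕ) {S : Set D} (hS : S.Nonempty) :
    (minSet (fun a b => H a < H b) S).Nonempty :=
  let ⟨m, hm, hmin⟩ := (InvImage.wf H wellFounded_lt).has_min S hS
  ⟨m, hm, hmin⟩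

theorem minSet_height_comp (H : D → ℕ) (f : E → D) {S : Set D}
    (hS : S.Nonempty → ∃ m ∈ minSet (fun a b => H a < H b) S, m ∈ Set.range f) :
    minSet (fun a b => H (f a) < H (f b)) (f ⁻¹' S) = f ⁻¹' minSet (fun a b => H a < H b) S := by
  ext w
  refine ⟨fun ⟨hw, hmin⟩ => ⟨hw, fun v hv hlt => ?_⟩,
    fun ⟨hw, hmin⟩ => ⟨hw, fun v hv => hmin (f v) hv⟩⟩
  obtain ⟨_, ⟨hm, hmmin⟩, w', rfl⟩ := hS ⟨v, hv⟩
  exact hmin w' hm ((not_lt.1 (hmmin v hv)).trans_lt hlt)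

variable {pref : D → D → Prop}

theorem Modular.pref_or_pref (hmod : Modular pref)
    (htrans : ∀ x y z, pref x y → pref y z → pref x z) {a b : D} (hab : pref a b) (c : D) :
    pref a c ∨ pref c b := by
  by_contra! h
  exact (hmod a c b ⟨h.1, fun hca => h.2 (htrans c a b hca hab)⟩
    ⟨h.2, fun hbc => h.1 (htrans a b c hab hbc)⟩).1 hab

/-- The height of `y` counts the sets of `𝒮` having a minimal element below `y`. -/
theorem Modular.exists_height_minSet_eq (hmod : Modular pref)
    (htrans : ∀ x y z, pref x y → pref y z → pref x z) {𝒮 : Set (Set D)} (h𝒮 : 𝒮.Finite)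
    (hsmooth : ∀ S ∈ 𝒮, S.Nonempty → (minSet pref S).Nonempty) :
    ∃ H : D → ℕ, ∀ S ∈ 𝒮, minSet pref S = minSet (fun a b => H a < H b) S := by
  let below (y : D) : Set (Set D) := {S ∈ 𝒮 | ∃ z ∈ minSet pref S, pref z y}
  have below_finite (y : D) : (below y).Finite := h𝒮.subset (Set.sep_subset _ _)
  have below_mono {S : Set D} {y v : D} (hy : y ∈ minSet pref S) (hv : v ∈ S) :
      below y ⊆ below v := fun T ⟨hT, z, hz, hzy⟩ =>
    ⟨hT, z, hz, (hmod.pref_or_pref htrans hzy v).resolve_right (hy.2 v hv)⟩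
  have below_drop {S : Set D} (hS : S ∈ 𝒮) {y : D} (hy : y ∈ S) (hy' : y ∉ minSet pref S) :
      ∃ z ∈ minSet pref S, below z ⊂ below y := by
    obtain ⟨w, hw, hwy⟩ : ∃ w ∈ S, pref w y := by
      by_contra! h
      exact hy' ⟨hy, h⟩
    obtain ⟨z, hz⟩ := hsmooth S hS ⟨y, hy⟩
    have hzy : pref z y := (hmod.pref_or_pref htrans hwy z).resolve_left (hz.2 w hw)
    refine ⟨z, hz, ssubset_iff_subset_not_superset.2 ⟨below_mono hz hy, fun h => ?_⟩⟩
    obtain ⟨-, z', hz', hz'z⟩ := h ⟨hS, z, hz, hzy⟩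
    exact hz.2 z' hz'.1 hz'z
  refine ⟨fun y => (below y).ncard, fun S hS => Set.ext fun y => ⟨fun hy => ?_, fun hy => ?_⟩⟩
  · exact ⟨hy.1, fun v hv => not_lt.2 (Set.ncard_le_ncard (below_mono hy hv) (below_finite v))⟩
  · by_contra hy'
    obtain ⟨z, hz, hlt⟩ := below_drop hS hy.1 hy'
    exact hy.2 z hz.1 (Set.ncard_lt_ncard hlt (below_finite y))

/-- `ψ` lists, through a surjection of `Δ` onto `β × List γ`, the results of finitely many
`step`s applied to values of `b`. -/
theorem exists_range_closed {Δ β γ : Type} [Infinite Δ] [Countable β] [Nonempty β]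
    [Countable γ] (b : β → D) (step : D → γ → D) :
    ∃ ψ : Δ → D, Set.range b ⊆ Set.range ψ ∧ ∀ w k, step (ψ w) k ∈ Set.range ψ := by
  obtain ⟨σ, hσ⟩ : ∃ σ : Δ → β × List γ, σ.Surjective := by
    obtain ⟨f, hf⟩ := exists_surjective_nat (β × List γ)
    exact ⟨f ∘ Function.invFun (Infinite.natEmbedding Δ),
      hf.comp (Function.invFun_surjective (Infinite.natEmbedding Δ).injective)⟩
  let word (p : β × List γ) : D := p.2.foldl step (b p.1)
  refine ⟨word ∘ σ, ?_, fun w k => ?_⟩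
  · rintro _ ⟨i, rfl⟩
    obtain ⟨w, hw⟩ := hσ (i, [])
    exact ⟨w, by simp [word, hw]⟩
  · obtain ⟨w', hw'⟩ := hσ ((σ w).1, (σ w).2 ++ [k])
    exact ⟨w', by simp [word, hw']⟩

end Order

namespace ClassInterp

variable {D E : Type}

def comap (I : ClassInterp C R D) (ψ : E → D) : ClassInterp C R E where
  interpC a := ψ ⁻¹' I.interpC a
  interpR r v w := I.interpR r (ψ v) (ψ w)

theorem eval_comap (I : ClassInterp C R D) (ψ : E → D)
    (hψ : ∀ w r e, ψ w ∈ I.eval (.ex r e) → ∃ w', I.interpR r (ψ w) (ψ w') ∧ ψ w' ∈ I.eval e)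
    (e : Concept C R) : (I.comap ψ).eval e = ψ ⁻¹' I.eval e := by
  induction e with
  | top | bot | atom => rfl
  | neg e ih => simp only [eval, ih, Set.preimage_compl]
  | conj e f ihe ihf => simp only [eval, ihe, ihf, Set.preimage_inter]
  | disj e f ihe ihf => simp only [eval, ihe, ihf, Set.preimage_union]
  | ex r e ih =>
    ext w
    simp only [eval, ih, Set.mem_preimage]
    refine ⟨fun ⟨w', hr, he⟩ => ⟨ψ w', hr, he⟩, hψ w r e⟩
  | all r e ih =>
    ext w
    simp only [eval, ih, Set.mem_preimage]
    refine ⟨fun h y hr => ?_, fun h w' hr => h (ψ w') hr⟩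
    by_contra hy
    obtain ⟨w', hr', he'⟩ := hψ w r (.neg e) ⟨y, hr, hy⟩
    exact he' (h w' hr')

def withHeight (I : ClassInterp C R D) (H : D → ℕ) : PrefInterp C R D where
  toClassInterp := I
  pref a b := H a < H b
  pref_irrefl _ := lt_irrefl _
  pref_trans _ _ _ := lt_trans
  smooth _ := minSet_height_nonempty H

/-- Downward Löwenheim–Skolem: close `x` and one height-minimal element of each concept under
witnesses of existential restrictions. -/
theorem exists_comap_eval_eq [Countable C] [Countable R] (Δ : Type) [Infinite Δ]
    (I : ClassInterp C R D) (H : D → ℕ) (x : D) :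
    ∃ ψ : Δ → D, x ∈ Set.range ψ ∧ ∀ e : Concept C R,
      (I.comap ψ).eval e = ψ ⁻¹' I.eval e ∧
      minSet ((I.comap ψ).withHeight (H ∘ ψ)).pref ((I.comap ψ).eval e) =
        ψ ⁻¹' minSet (fun a b => H a < H b) (I.eval e) := by
  have : ∀ (u : D) (k : R × Concept C R), ∃ v,
      u ∈ I.eval (.ex k.1 k.2) → I.interpR k.1 u v ∧ v ∈ I.eval k.2 := fun u k => by
    by_cases hu : u ∈ I.eval (.ex k.1 k.2)
    · obtain ⟨v, hv⟩ := hu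
      exact ⟨v, fun _ => hv⟩
    · exact ⟨u, fun h => absurd h hu⟩
  choose wit hwit using this
  have : ∀ e : Concept C R, ∃ m,
      (I.eval e).Nonempty → m ∈ minSet (fun a b => H a < H b) (I.eval e) := fun e => by
    by_cases he : (I.eval e).Nonempty
    · obtain ⟨m, hm⟩ := minSet_height_nonempty H he
      exact ⟨m, fun _ => hm⟩
    · exact ⟨x, fun h => absurd h he⟩
  choose m hm using this
  obtain ⟨ψ, hbase, hstep⟩ :=
    exists_range_closed (Δ := Δ) (fun o : Option (Concept C R) => o.elim x m) wit
  have heval := I.eval_comap ψ fun w r e hw => by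
    obtain ⟨w', hw'⟩ := hstep w (r, e)
    exact ⟨w', hw' ▸ hwit _ (r, e) hw⟩
  refine ⟨ψ, hbase ⟨none, rfl⟩, fun e => ⟨heval e, ?_⟩⟩
  rw [heval]
  exact minSet_height_comp H ψ fun hne => ⟨m e, hm e hne, hbase ⟨some e, rfl⟩⟩

end ClassInterp

theorem modEntails_iff_all_ranked_models_on_general {C R : Type} [Finite C] [Finite R]
    (Δ : Type) [Infinite Δ] (K : KB C R) (c d : Concept C R) :
    modEntails K (Stmt.dci c d) ↔
      ∀ M : PrefInterp C R Δ, IsRanked M.pref → M.isModel K → M.satDCI c d := by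
  refine ⟨fun h M hM hK => h Δ inferInstance M hM.modular hK, fun h D _ P hmod hK x hx => ?_⟩
  obtain ⟨H, hH⟩ : ∃ H : D → ℕ, ∀ g ∈ insert c (Prod.fst '' K.dbox),
      minSet P.pref (P.eval g) = minSet (fun a b => H a < H b) (P.eval g) := by
    obtain ⟨H, hH⟩ := hmod.exists_height_minSet_eq P.pref_trans
      (((K.dbox_finite.image Prod.fst).insert c).image P.toClassInterp.eval)
      (by rintro _ ⟨g, -, rfl⟩; exact P.smooth g)
    exact ⟨H, fun g hg => hH _ (Set.mem_image_of_mem _ hg)⟩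
  obtain ⟨ψ, ⟨w, rfl⟩, hψ⟩ := P.exists_comap_eval_eq Δ H x
  let M := (P.comap ψ).withHeight (H ∘ ψ)
  have hM : M.isModel K := by
    refine ⟨fun p hp => ?_, fun p hp => ?_⟩
    · change (P.comap ψ).eval p.1 ⊆ (P.comap ψ).eval p.2
      rw [(hψ p.1).1, (hψ p.2).1]
      exact Set.preimage_mono (hK.1 p hp)
    · change minSet M.pref ((P.comap ψ).eval p.1) ⊆ (P.comap ψ).eval p.2
      rw [(hψ p.1).2, (hψ p.2).1, ← hH p.1 (Set.mem_insert_of_mem _ ⟨p, hp, rfl⟩)]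
      exact Set.preimage_mono (hK.2 p hp)
  have hw : w ∈ minSet M.pref ((P.comap ψ).eval c) := by
    rw [(hψ c).2, ← hH c (Set.mem_insert _ _)]
    exact hx
  have hwd : w ∈ (P.comap ψ).eval d := h M (isRanked_height_lt _) hM hw
  rwa [(hψ d).1] at hwd

/-- for a fixed countably infinite domain `Δ`, modular entailment of a
DCI from `K` coincides with truth in all ranked models of `K` with domain `Δ`. -/
theorem modEntails_iff_all_ranked_models_on {C R : Type} [Finite C] [Finite R]
    (Δ : Type) [Countable Δ] [Infinite Δ] (K : KB C R) (c d : Concept C R) :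
    modEntails K (Stmt.dci c d) ↔
      ∀ M : PrefInterp C R Δ, IsRanked M.pref → M.isModel K → M.satDCI c d :=
  modEntails_iff_all_ranked_models_on_general Δ K c d

end DefeasibleDL
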